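/- Let f : ℝ^{d_x} × ℝ^{d_y} → ℝ be differentiable and suppose that for every y the map x ↦ ∇_x f(x,y) is L_x-Lipschitz and for every x the map y ↦ ∇_y f(x,y) is L_y-Lipschitz. Fix (x,y), μ₁ > 0 and μ₂ > 0. If u is uniformly distributed on the unit sphere of ℝ^{d_x}, then E‖(d_x/μ₁)(f(x+μ₁u, y) − f(x,y)) u‖² ≤ 2 d_x ‖∇_x f(x,y)‖² + μ₁² d_x² L_x² / 2; and if v is uniformly distributed on the unit sphere of ℝ^{d_y}, then E‖(d_y/μ₂)(f(x, y+μ₂v) − f(x,y)) v‖² ≤ 2 d_y ‖∇_y f(x,y)‖² + μ₂² d_y² L_y² / 2. -/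

import Mathlib

/-! For unit `u`, the descent lemma `|g (x + μ u) - g x - μ ⟪∇g x, u⟫| ≤ L μ² / 2` gives
`(g (x + μ u) - g x)² ≤ 2 μ² ⟪∇g x, u⟫² + L² μ⁴ / 2`. Integrating against the uniform measure
on the sphere, rotation invariance makes `∫ ⟪G, u⟫²` depend on `‖G‖` only, and summing it over an
orthonormal basis gives `∫ ‖u‖² = 1`, so `∫ ⟪G, u⟫² = ‖G‖² / d`. -/

open MeasureTheory Metric
open scoped ENNReal RealInnerProductSpace

/-- Uniform probability measure on the closed unit Euclidean ball of `ℝ^d`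
(normalized Lebesgue measure on the ball). -/
noncomputable def ballUniform (d : ℕ) : Measure (EuclideanSpace ℝ (Fin d)) :=
  (volume (closedBall (0 : EuclideanSpace ℝ (Fin d)) 1))⁻¹ •
    volume.restrict (closedBall (0 : EuclideanSpace ℝ (Fin d)) 1)

/-- Uniform probability measure on the unit Euclidean sphere of `ℝ^d`, realized as the
pushforward of the uniform measure on the unit ball under the radial projection
`x ↦ x/‖x‖`; this coincides with the normalized surface (rotation invariant) measure. -/
noncomputable def sphereUniform (d : ℕ) : Measure (EuclideanSpace ℝ (Fin d)) :=
  (ballUniform d).map fun x => ‖x‖⁻¹ • x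

section Smooth

variable {E : Type*} [NormedAddCommGroup E] [InnerProductSpace ℝ E] [CompleteSpace E]

theorem abs_sub_sub_inner_gradient_le {g : E → ℝ} (hg : Differentiable ℝ g) {L : ℝ}
    (hlip : ∀ a b, ‖gradient g a - gradient g b‖ ≤ L * ‖a - b‖) (x w : E) :
    |g (x + w) - g x - ⟪gradient g x, w⟫| ≤ L * ‖w‖ ^ 2 / 2 := by
  set φ : ℝ → ℝ := fun t => g (x + t • w) - g x - t * ⟪gradient g x, w⟫
  have hφ : ∀ t, HasDerivAt φ (⟪gradient g (x + t • w), w⟫ - ⟪gradient g x, w⟫) t := by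
    intro t
    have hline : HasDerivAt (fun t : ℝ => x + t • w) w t := by
      simpa using ((hasDerivAt_id t).smul_const w).const_add x
    have hcomp := (hg (x + t • w)).hasGradientAt.hasFDerivAt.comp_hasDerivAt t hline
    exact ((hcomp.sub_const (g x)).sub ((hasDerivAt_id t).mul_const _)).congr_deriv (by simp)
  have hB : ∀ t, HasDerivAt (fun t : ℝ => L * ‖w‖ ^ 2 * t ^ 2 / 2) (L * ‖w‖ ^ 2 * t) t :=
    fun t => (((hasDerivAt_pow 2 t).const_mul _).div_const 2).congr_deriv (by push_cast; ring)
  have hbound : ∀ t ∈ Set.Ico (0 : ℝ) 1,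
      ‖⟪gradient g (x + t • w), w⟫ - ⟪gradient g x, w⟫‖ ≤ L * ‖w‖ ^ 2 * t := by
    rintro t ⟨ht, -⟩
    rw [← inner_sub_left]
    calc ‖⟪gradient g (x + t • w) - gradient g x, w⟫‖
        ≤ ‖gradient g (x + t • w) - gradient g x‖ * ‖w‖ := norm_inner_le_norm _ _
      _ ≤ L * ‖(x + t • w) - x‖ * ‖w‖ := by gcongr; exact hlip _ _
      _ = L * ‖w‖ ^ 2 * t := by
          rw [add_sub_cancel_left, norm_smul, Real.norm_eq_abs, abs_of_nonneg ht]
          ring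
  simpa [φ] using image_norm_le_of_norm_deriv_right_le_deriv_boundary
    (fun t _ => (hφ t).continuousAt.continuousWithinAt) (fun t _ => (hφ t).hasDerivWithinAt)
    (by simp [φ]) hB hbound (Set.right_mem_Icc.2 zero_le_one)

theorem sq_sub_le_of_lipschitz_gradient {g : E → ℝ} (hg : Differentiable ℝ g) {L : ℝ}
    (hlip : ∀ a b, ‖gradient g a - gradient g b‖ ≤ L * ‖a - b‖) (x w : E) :
    (g (x + w) - g x) ^ 2 ≤ 2 * ⟪gradient g x, w⟫ ^ 2 + L ^ 2 * ‖w‖ ^ 4 / 2 := by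
  have h := abs_le.1 (abs_sub_sub_inner_gradient_le hg hlip x w)
  nlinarith [sq_nonneg (g (x + w) - g x - 2 * ⟪gradient g x, w⟫)]

end Smooth

section InvariantMeasure

variable {E : Type*} [NormedAddCommGroup E] [InnerProductSpace ℝ E] [MeasurableSpace E]
  [BorelSpace E] {σ : Measure E}

theorem integrable_inner_sq [IsFiniteMeasure σ] (hσ : ∀ᵐ u ∂σ, ‖u‖ = 1) (G : E) :
    Integrable (fun u => ⟪G, u⟫ ^ 2) σ := by
  refine (integrable_const (‖G‖ ^ 2)).mono'
    ((continuous_const.inner continuous_id).pow 2).aestronglyMeasurable ?_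
  filter_upwards [hσ] with u hu
  rw [Real.norm_eq_abs, abs_pow, ← mul_one (‖G‖ ^ 2), ← one_pow 2, ← hu, ← mul_pow]
  exact pow_le_pow_left₀ (abs_nonneg _) (abs_real_inner_le_norm G u) 2

theorem integral_inner_sq_eq_of_norm_eq (hσ : ∀ e : E ≃ₗᵢ[ℝ] E, σ.map e = σ) {v w : E}
    (hvw : ‖v‖ = ‖w‖) : ∫ u, ⟪v, u⟫ ^ 2 ∂σ = ∫ u, ⟪w, u⟫ ^ 2 ∂σ := by
  set e : E ≃ₗᵢ[ℝ] E := (ℝ ∙ (w - v))ᗮ.reflection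
  have he : MeasurePreserving e σ σ := ⟨e.continuous.measurable, hσ e⟩
  rw [← he.integral_comp e.toHomeomorph.measurableEmbedding]
  congr 1 with u
  rw [← Submodule.reflection_sub hvw.symm, e.inner_map_map]

theorem integral_inner_sq_eq_div_finrank [FiniteDimensional ℝ E] [IsProbabilityMeasure σ]
    (hσ : ∀ᵐ u ∂σ, ‖u‖ = 1) (hinv : ∀ e : E ≃ₗᵢ[ℝ] E, σ.map e = σ) (G : E) :
    ∫ u, ⟪G, u⟫ ^ 2 ∂σ = ‖G‖ ^ 2 / Module.finrank ℝ E := by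
  rcases eq_or_ne G 0 with rfl | hG
  · simp
  set v := ‖G‖⁻¹ • G
  have hv : ‖v‖ = 1 := norm_smul_inv_norm hG
  set b := stdOrthonormalBasis ℝ E
  have hsum : ∑ i, ∫ u, ⟪b i, u⟫ ^ 2 ∂σ = 1 := by
    rw [← integral_finsetSum _ fun i _ => integrable_inner_sq hσ (b i)]
    rw [integral_congr_ae (g := fun _ => (1 : ℝ)), integral_const, probReal_univ, one_smul]
    filter_upwards [hσ] with u hu
    simpa [hu] using b.sum_sq_norm_inner_right u
  have hbasis : ∀ i, ∫ u, ⟪b i, u⟫ ^ 2 ∂σ = ∫ u, ⟪v, u⟫ ^ 2 ∂σ := fun i =>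
    integral_inner_sq_eq_of_norm_eq hinv (by rw [b.norm_eq_one, hv])
  simp only [hbasis, Finset.sum_const, Finset.card_univ, Fintype.card_fin, nsmul_eq_mul] at hsum
  have hd : (Module.finrank ℝ E : ℝ) ≠ 0 := by
    rintro h
    simp [h] at hsum
  have hscale : ∀ u, ⟪G, u⟫ ^ 2 = ‖G‖ ^ 2 * ⟪v, u⟫ ^ 2 := fun u => by
    rw [real_inner_smul_left]
    field_simp
  simp_rw [hscale]
  rw [integral_const_mul, eq_div_iff hd, mul_assoc, mul_comm _ (Module.finrank ℝ E : ℝ), hsum,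
    mul_one]

theorem integral_norm_sq_zo_estimator_le [FiniteDimensional ℝ E] [IsProbabilityMeasure σ]
    (hσ : ∀ᵐ u ∂σ, ‖u‖ = 1) (hinv : ∀ e : E ≃ₗᵢ[ℝ] E, σ.map e = σ) {g : E → ℝ}
    (hg : Differentiable ℝ g) {L : ℝ}
    (hlip : ∀ a b, ‖gradient g a - gradient g b‖ ≤ L * ‖a - b‖) (x : E) {μ : ℝ} (hμ : μ ≠ 0) :
    ∫ u, ‖((Module.finrank ℝ E / μ) * (g (x + μ • u) - g x)) • u‖ ^ 2 ∂σ ≤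
      2 * Module.finrank ℝ E * ‖gradient g x‖ ^ 2 +
        μ ^ 2 * (Module.finrank ℝ E) ^ 2 * L ^ 2 / 2 := by
  set d : ℝ := (Module.finrank ℝ E : ℝ) with hd_def
  set G := gradient g x
  have hpoint : ∀ᵐ u ∂σ, ‖((d / μ) * (g (x + μ • u) - g x)) • u‖ ^ 2 ≤
      (d / μ) ^ 2 * (2 * μ ^ 2 * ⟪G, u⟫ ^ 2 + L ^ 2 * μ ^ 4 / 2) := by
    filter_upwards [hσ] with u hu
    have h := sq_sub_le_of_lipschitz_gradient hg hlip x (μ • u)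
    rw [real_inner_smul_right, norm_smul, hu, mul_one, Real.norm_eq_abs, pow_abs,
      abs_of_nonneg (by positivity)] at h
    rw [norm_smul, hu, mul_one, Real.norm_eq_abs, sq_abs, mul_pow]
    gcongr
    linarith [h]
  have hint : Integrable (fun u => 2 * μ ^ 2 * ⟪G, u⟫ ^ 2 + L ^ 2 * μ ^ 4 / 2) σ :=
    ((integrable_inner_sq hσ G).const_mul _).add (integrable_const _)
  refine (integral_mono_of_nonneg (.of_forall fun u => by positivity) (hint.const_mul _)
    hpoint).trans_eq ?_
  rw [integral_const_mul, integral_add ((integrable_inner_sq hσ G).const_mul _)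
    (integrable_const _), integral_const_mul, integral_inner_sq_eq_div_finrank hσ hinv,
    integral_const, probReal_univ, one_smul, ← hd_def]
  rcases eq_or_ne d 0 with hd | hd
  · simp [d, hd]
  · field_simp

end InvariantMeasure

section UniformMeasures

variable {d : ℕ}

instance : IsProbabilityMeasure (ballUniform d) := by
  constructor
  rw [ballUniform, Measure.smul_apply, Measure.restrict_apply MeasurableSet.univ,
    Set.univ_inter, smul_eq_mul]
  exact ENNReal.inv_mul_cancel (measure_closedBall_pos volume _ one_pos).ne'
    measure_closedBall_lt_top.ne

theorem ballUniform_map_linearIsometryEquiv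
    (e : EuclideanSpace ℝ (Fin d) ≃ₗᵢ[ℝ] EuclideanSpace ℝ (Fin d)) :
    (ballUniform d).map e = ballUniform d := by
  have hpre : e ⁻¹' closedBall 0 1 = closedBall 0 1 := by
    ext z
    simp
  have hres := (e.measurePreserving.restrict_preimage
    (measurableSet_closedBall (x := 0) (ε := 1))).map_eq
  rw [hpre] at hres
  rw [ballUniform, Measure.map_smul, hres]

theorem ballUniform_ae_ne_zero (hd : 0 < d) : ∀ᵐ x ∂ballUniform d, x ≠ 0 := by
  have : Nonempty (Fin d) := ⟨⟨0, hd⟩⟩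
  exact Measure.ae_smul_measure (ae_restrict_of_ae (Measure.ae_ne volume 0)) _

theorem measurable_inv_norm_smul :
    Measurable fun x : EuclideanSpace ℝ (Fin d) => ‖x‖⁻¹ • x :=
  measurable_norm.inv.smul measurable_id

instance : IsProbabilityMeasure (sphereUniform d) :=
  Measure.isProbabilityMeasure_map measurable_inv_norm_smul.aemeasurable

theorem sphereUniform_ae_norm_eq_one (hd : 0 < d) : ∀ᵐ u ∂sphereUniform d, ‖u‖ = 1 := by
  rw [sphereUniform, ae_map_iff measurable_inv_norm_smul.aemeasurable
    (measurableSet_eq_fun measurable_norm measurable_const)]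
  filter_upwards [ballUniform_ae_ne_zero hd] with x hx
  exact norm_smul_inv_norm hx

theorem sphereUniform_map_linearIsometryEquiv
    (e : EuclideanSpace ℝ (Fin d) ≃ₗᵢ[ℝ] EuclideanSpace ℝ (Fin d)) :
    (sphereUniform d).map e = sphereUniform d := by
  have hcomm : (e ∘ fun x => ‖x‖⁻¹ • x) = (fun x => ‖x‖⁻¹ • x) ∘ e := by
    ext1 x
    simp
  rw [sphereUniform, Measure.map_map e.continuous.measurable measurable_inv_norm_smul, hcomm,
    ← Measure.map_map measurable_inv_norm_smul e.continuous.measurable,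
    ballUniform_map_linearIsometryEquiv]

end UniformMeasures

/-- Second-moment bound for the single-sample zeroth-order gradient estimators. -/
theorem zo_estimator_second_moment
    (dx dy : ℕ) (hdx : 1 ≤ dx) (hdy : 1 ≤ dy)
    (f : EuclideanSpace ℝ (Fin dx) → EuclideanSpace ℝ (Fin dy) → ℝ)
    (hdiff : Differentiable ℝ
      fun p : EuclideanSpace ℝ (Fin dx) × EuclideanSpace ℝ (Fin dy) => f p.1 p.2)
    (Lx Ly : ℝ)
    (hlipx : ∀ (y : EuclideanSpace ℝ (Fin dy)) (x₁ x₂ : EuclideanSpace ℝ (Fin dx)),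
      ‖gradient (fun x => f x y) x₁ - gradient (fun x => f x y) x₂‖ ≤ Lx * ‖x₁ - x₂‖)
    (hlipy : ∀ (x : EuclideanSpace ℝ (Fin dx)) (y₁ y₂ : EuclideanSpace ℝ (Fin dy)),
      ‖gradient (fun y => f x y) y₁ - gradient (fun y => f x y) y₂‖ ≤ Ly * ‖y₁ - y₂‖)
    (x : EuclideanSpace ℝ (Fin dx)) (y : EuclideanSpace ℝ (Fin dy))
    (μ₁ μ₂ : ℝ) (hμ₁ : 0 < μ₁) (hμ₂ : 0 < μ₂) :
    (∫ u, ‖(((dx : ℝ) / μ₁) * (f (x + μ₁ • u) y - f x y)) • u‖ ^ 2 ∂(sphereUniform dx)) ≤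
      2 * (dx : ℝ) * ‖gradient (fun x' => f x' y) x‖ ^ 2 + μ₁ ^ 2 * (dx : ℝ) ^ 2 * Lx ^ 2 / 2 ∧
    (∫ v, ‖(((dy : ℝ) / μ₂) * (f x (y + μ₂ • v) - f x y)) • v‖ ^ 2 ∂(sphereUniform dy)) ≤
      2 * (dy : ℝ) * ‖gradient (fun y' => f x y') y‖ ^ 2 + μ₂ ^ 2 * (dy : ℝ) ^ 2 * Ly ^ 2 / 2 := by
  have hfx : Differentiable ℝ fun x' => f x' y :=
    hdiff.comp (differentiable_id.prodMk (differentiable_const y))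
  have hfy : Differentiable ℝ fun y' => f x y' :=
    hdiff.comp ((differentiable_const x).prodMk differentiable_id)
  constructor
  · simpa only [finrank_euclideanSpace_fin] using
      integral_norm_sq_zo_estimator_le (sphereUniform_ae_norm_eq_one hdx)
        sphereUniform_map_linearIsometryEquiv hfx (hlipx y) x hμ₁.ne'
  · simpa only [finrank_euclideanSpace_fin] using
      integral_norm_sq_zo_estimator_le (sphereUniform_ae_norm_eq_one hdy)
        sphereUniform_map_linearIsometryEquiv hfy (hlipy x) y hμ₂.ne'
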